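/- arXiv:1210.8175 — 2 statements merged into one kernel-verified Lean document; each statement's English description precedes it below -/
import Mathlib

section
/- Lemma (one Euler step preserves Lipschitz continuity of expectations): Let G be a standard d-dimensional Gaussian vector, h > 0, and b: ℝ^d → ℝ^d, σ: ℝ^d → ℝ^{d×d} Lipschitz with constants C_b and C_σ respectively (σ in Frobenius norm). If φ: ℝ^d → ℝ is Lipschitz with constant C, then the map x ↦ E[φ(x + b(x)h + σ(x)√h G)] is Lipschitz with constant C(1 + L h), where L := C_b + C_σ²/2. -/
open MeasureTheory ProbabilityTheory

/-- The Euclidean norm on `Fin n → ℝ`. -/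
noncomputable def vnorm {n : ℕ} (x : Fin n → ℝ) : ℝ := Real.sqrt (∑ i, x i ^ 2)

/-- The Frobenius norm of a `d × d` real matrix. -/
noncomputable def frobNorm {n : ℕ} (A : Matrix (Fin n) (Fin n) ℝ) : ℝ :=
  Real.sqrt (∑ i, ∑ j, A i j ^ 2)

/-!
With `X_x = x + b(x) h + √h σ(x) G`, the difference `X_x - X_y = v + √h A G` is affine in `G`,
where `v = x - y + h (b x - b y)` and `A = σ x - σ y`. Hence
`|E φ(X_x) - E φ(X_y)| ≤ C E|X_x - X_y| ≤ C (E|X_x - X_y|²)^{1/2}`, and since `G` is centred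
with identity covariance,
`E|v + √h A G|² = |v|² + h |A|_F² ≤ ((1 + C_b h)² + C_σ² h) |x - y|² ≤ (1 + L h)² |x - y|²`.
-/

open scoped RealInnerProductSpace
open WithLp Matrix

section Norms

variable {n : ℕ}

lemma vnorm_eq_norm_toLp (x : Fin n → ℝ) : vnorm x = ‖toLp 2 x‖ := by
  simp only [vnorm, EuclideanSpace.norm_eq, Real.norm_eq_abs, sq_abs]

lemma vnorm_nonneg (x : Fin n → ℝ) : 0 ≤ vnorm x := Real.sqrt_nonneg _

lemma vnorm_sq (x : Fin n → ℝ) : vnorm x ^ 2 = ∑ i, x i ^ 2 :=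
  Real.sq_sqrt (Finset.sum_nonneg fun _ _ => sq_nonneg _)

lemma vnorm_pos {x : Fin n → ℝ} (hx : x ≠ 0) : 0 < vnorm x := by
  rw [vnorm_eq_norm_toLp, norm_pos_iff]
  exact fun h => hx (congrArg ofLp h)

lemma vnorm_add_le (x y : Fin n → ℝ) : vnorm (x + y) ≤ vnorm x + vnorm y := by
  simp only [vnorm_eq_norm_toLp, toLp_add]
  exact norm_add_le _ _

lemma vnorm_smul (c : ℝ) (x : Fin n → ℝ) : vnorm (c • x) = |c| * vnorm x := by
  simp only [vnorm_eq_norm_toLp, toLp_smul, norm_smul, Real.norm_eq_abs]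

lemma vnorm_add_smul_le {u w : Fin n → ℝ} {h K : ℝ} (hh : 0 ≤ h)
    (hw : vnorm w ≤ K * vnorm u) : vnorm (u + h • w) ≤ (1 + K * h) * vnorm u :=
  calc vnorm (u + h • w) ≤ vnorm u + h * vnorm w := by
        simpa only [vnorm_smul, abs_of_nonneg hh] using vnorm_add_le u (h • w)
    _ ≤ vnorm u + h * (K * vnorm u) := by gcongr
    _ = (1 + K * h) * vnorm u := by ring

lemma continuous_vnorm : Continuous (vnorm (n := n)) := by
  simpa only [funext vnorm_eq_norm_toLp] using (PiLp.continuous_toLp 2 _).norm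

lemma frobNorm_nonneg (A : Matrix (Fin n) (Fin n) ℝ) : 0 ≤ frobNorm A := Real.sqrt_nonneg _

lemma frobNorm_sq (A : Matrix (Fin n) (Fin n) ℝ) : frobNorm A ^ 2 = ∑ i, vnorm (A i) ^ 2 := by
  simp only [frobNorm, vnorm_sq]
  exact Real.sq_sqrt (Finset.sum_nonneg fun _ _ => Finset.sum_nonneg fun _ _ => sq_nonneg _)

lemma continuous_of_abs_sub_le_mul_vnorm {C : ℝ} {φ : (Fin n → ℝ) → ℝ}
    (hφ : ∀ x y, |φ x - φ y| ≤ C * vnorm (x - y)) : Continuous φ := by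
  have hlip : LipschitzWith (max C 0).toNNReal (φ ∘ ofLp (p := 2)) := by
    refine LipschitzWith.of_dist_le_mul fun x y => ?_
    rw [Real.coe_toNNReal _ (le_max_right C 0), Real.dist_eq, dist_eq_norm]
    calc |φ (ofLp x) - φ (ofLp y)| ≤ C * vnorm (ofLp x - ofLp y) := hφ _ _
      _ ≤ max C 0 * ‖x - y‖ := by
        rw [vnorm_eq_norm_toLp, ← ofLp_sub, toLp_ofLp]
        exact mul_le_mul_of_nonneg_right (le_max_left C 0) (norm_nonneg _)
  exact hlip.continuous.comp (PiLp.continuous_toLp 2 _)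

end Norms

lemma sqrt_sq_add_mul_sq_le {h Cb Cσ s V F : ℝ} (hh : 0 ≤ h) (hCb : 0 ≤ Cb) (hs : 0 ≤ s)
    (hV0 : 0 ≤ V) (hV : V ≤ (1 + Cb * h) * s) (hF0 : 0 ≤ F) (hF : F ≤ Cσ * s) :
    √(V ^ 2 + h * F ^ 2) ≤ (1 + (Cb + Cσ ^ 2 / 2) * h) * s := by
  have hexpand : ((1 + (Cb + Cσ ^ 2 / 2) * h) * s) ^ 2 = ((1 + Cb * h) * s) ^ 2 +
      h * (Cσ * s) ^ 2 + s ^ 2 * (Cb * Cσ ^ 2 * h ^ 2 + (Cσ ^ 2 * h / 2) ^ 2) := by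
    ring
  have hL : 0 ≤ 1 + (Cb + Cσ ^ 2 / 2) * h := by
    nlinarith [mul_nonneg hCb hh, mul_nonneg (sq_nonneg Cσ) hh]
  have hrem : 0 ≤ s ^ 2 * (Cb * Cσ ^ 2 * h ^ 2 + (Cσ ^ 2 * h / 2) ^ 2) := by
    have := mul_nonneg (mul_nonneg hCb (sq_nonneg Cσ)) (sq_nonneg h)
    positivity
  have hV2 : V ^ 2 ≤ ((1 + Cb * h) * s) ^ 2 := pow_le_pow_left₀ hV0 hV 2
  have hF2 : h * F ^ 2 ≤ h * (Cσ * s) ^ 2 :=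
    mul_le_mul_of_nonneg_left (pow_le_pow_left₀ hF0 hF 2) hh
  calc √(V ^ 2 + h * F ^ 2) ≤ √(((1 + (Cb + Cσ ^ 2 / 2) * h) * s) ^ 2) :=
        Real.sqrt_le_sqrt (by linarith)
    _ = (1 + (Cb + Cσ ^ 2 / 2) * h) * s := Real.sqrt_sq (mul_nonneg hL hs)

lemma integral_le_sqrt_integral_sq {Ω : Type*} [MeasurableSpace Ω] {μ : Measure Ω}
    [IsProbabilityMeasure μ] {f : Ω → ℝ} (hf : MemLp f 2 μ) :
    ∫ ω, f ω ∂μ ≤ √(∫ ω, f ω ^ 2 ∂μ) := by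
  have hvar := variance_nonneg f μ
  rw [variance_eq_sub hf] at hvar
  exact (le_abs_self _).trans (Real.abs_le_sqrt (by simpa using hvar))

section StdGaussian

variable {E : Type*} [NormedAddCommGroup E] [InnerProductSpace ℝ E] [FiniteDimensional ℝ E]
  [MeasurableSpace E] [BorelSpace E]

lemma memLp_const_add_inner_stdGaussian (c : ℝ) (a : E) :
    MemLp (fun g => c + ⟪a, g⟫) 2 (stdGaussian E) :=
  (memLp_const c).add (IsGaussian.memLp_dual _ (innerSL ℝ a) 2 (by simp))

lemma integral_sq_const_add_inner_stdGaussian (c : ℝ) (a : E) :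
    ∫ g, (c + ⟪a, g⟫) ^ 2 ∂stdGaussian E = c ^ 2 + ‖a‖ ^ 2 := by
  have hmean : ∫ g, (c + ⟪a, g⟫) ∂stdGaussian E = c := by
    have hint : Integrable (fun g => ⟪a, g⟫) (stdGaussian E) :=
      IsGaussian.integrable_dual _ (innerSL ℝ a)
    have hzero : ∫ g, ⟪a, g⟫ ∂stdGaussian E = 0 := by
      simpa using integral_strongDual_stdGaussian (innerSL ℝ a)
    rw [integral_add (integrable_const c) hint, hzero]
    simp
  have hvar : Var[fun g => ⟪a, g⟫; stdGaussian E] = ‖a‖ ^ 2 := by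
    simpa using variance_dual_stdGaussian (innerSL ℝ a)
  have hsub := variance_eq_sub (memLp_const_add_inner_stdGaussian c a)
  rw [variance_const_add (by fun_prop), hvar, hmean] at hsub
  simp only [Pi.pow_apply] at hsub
  linarith

end StdGaussian

lemma integral_comp_eq_integral_stdGaussian {Ω : Type*} [MeasurableSpace Ω] {μ : Measure Ω}
    {n : ℕ} {G : Ω → Fin n → ℝ} (hG : μ.map G = Measure.pi fun _ => gaussianReal 0 1)
    {F : (Fin n → ℝ) → ℝ} (hF : Measurable F) :
    ∫ ω, F (G ω) ∂μ = ∫ g, F (ofLp g) ∂stdGaussian (EuclideanSpace ℝ (Fin n)) := by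
  have hGm : AEMeasurable G μ := .of_map_ne_zero (by rw [hG]; exact IsProbabilityMeasure.ne_zero _)
  rw [← map_pi_eq_stdGaussian, ← MeasurableEquiv.coe_toLp, integral_map_equiv]
  simp only [MeasurableEquiv.toLp_apply, ofLp_toLp]
  rw [← hG, integral_map hGm hF.aestronglyMeasurable]

section AffineGaussian

variable {n : ℕ} (v : Fin n → ℝ) (A : Matrix (Fin n) (Fin n) ℝ) (r : ℝ)

lemma mulVec_ofLp_apply (g : EuclideanSpace ℝ (Fin n)) (i : Fin n) :
    (A *ᵥ ofLp g) i = ⟪toLp 2 (A i), g⟫ := by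
  simp [PiLp.inner_apply, mulVec, dotProduct, mul_comm]

lemma vnorm_add_smul_mulVec_sq (g : EuclideanSpace ℝ (Fin n)) :
    vnorm (v + r • (A *ᵥ ofLp g)) ^ 2 = ∑ i, (v i + ⟪toLp 2 (r • A i), g⟫) ^ 2 := by
  simp [vnorm_sq, mulVec_ofLp_apply, inner_smul_left]

lemma integrable_vnorm_add_smul_mulVec_sq :
    Integrable (fun g => vnorm (v + r • (A *ᵥ ofLp g)) ^ 2)
      (stdGaussian (EuclideanSpace ℝ (Fin n))) := by
  simp only [vnorm_add_smul_mulVec_sq]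
  exact integrable_finsetSum _ fun i _ =>
    (memLp_const_add_inner_stdGaussian (v i) (toLp 2 (r • A i))).integrable_sq

lemma integral_vnorm_add_smul_mulVec_sq :
    ∫ g, vnorm (v + r • (A *ᵥ ofLp g)) ^ 2 ∂stdGaussian (EuclideanSpace ℝ (Fin n)) =
      vnorm v ^ 2 + r ^ 2 * frobNorm A ^ 2 := by
  simp only [vnorm_add_smul_mulVec_sq]
  rw [integral_finsetSum _ fun i _ =>
    (memLp_const_add_inner_stdGaussian (v i) (toLp 2 (r • A i))).integrable_sq]
  simp only [integral_sq_const_add_inner_stdGaussian, ← vnorm_eq_norm_toLp, vnorm_smul, mul_pow,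
    sq_abs, Finset.sum_add_distrib, vnorm_sq, frobNorm_sq, Finset.mul_sum]

lemma memLp_vnorm_add_smul_mulVec :
    MemLp (fun g => vnorm (v + r • (A *ᵥ ofLp g))) 2
      (stdGaussian (EuclideanSpace ℝ (Fin n))) := by
  refine (memLp_two_iff_integrable_sq ?_).mpr (integrable_vnorm_add_smul_mulVec_sq v A r)
  exact (continuous_vnorm.comp (by fun_prop)).aestronglyMeasurable

end AffineGaussian

section EulerStep

variable {d : ℕ} (b : (Fin d → ℝ) → Fin d → ℝ)
  (σ : (Fin d → ℝ) → Matrix (Fin d) (Fin d) ℝ) (h : ℝ)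

noncomputable def eulerStep (x g : Fin d → ℝ) : Fin d → ℝ :=
  fun i => x i + b x i * h + √h * (σ x *ᵥ g) i

lemma eulerStep_eq (x g : Fin d → ℝ) :
    eulerStep b σ h x g = x + h • b x + √h • (σ x *ᵥ g) := by
  ext i; simp [eulerStep, mul_comm]

lemma eulerStep_sub_eulerStep (x y g : Fin d → ℝ) :
    eulerStep b σ h x g - eulerStep b σ h y g =
      (x - y + h • (b x - b y)) + √h • ((σ x - σ y) *ᵥ g) := by
  simp only [eulerStep_eq, sub_mulVec, smul_sub]; abel

lemma continuous_eulerStep (x : Fin d → ℝ) : Continuous (eulerStep b σ h x) := by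
  simp only [funext (eulerStep_eq b σ h x)]
  fun_prop

variable {C : ℝ} {φ : (Fin d → ℝ) → ℝ}

lemma integrable_comp_eulerStep (hφ : ∀ x y, |φ x - φ y| ≤ C * vnorm (x - y))
    (x : Fin d → ℝ) :
    Integrable (fun g => φ (eulerStep b σ h x (ofLp g)))
      (stdGaussian (EuclideanSpace ℝ (Fin d))) := by
  set u := x + h • b x
  have hnoise : Integrable (fun g => vnorm (0 + √h • (σ x *ᵥ ofLp g)))
      (stdGaussian (EuclideanSpace ℝ (Fin d))) :=
    (memLp_vnorm_add_smul_mulVec 0 (σ x) √h).integrable one_le_two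
  refine ((integrable_const |φ u|).add (hnoise.const_mul C)).mono'
    ((continuous_of_abs_sub_le_mul_vnorm hφ).comp
      ((continuous_eulerStep b σ h x).comp (PiLp.continuous_ofLp 2 _))).aestronglyMeasurable
    (ae_of_all _ fun g => ?_)
  have hdiff : eulerStep b σ h x (ofLp g) - u = 0 + √h • (σ x *ᵥ ofLp g) := by
    rw [eulerStep_eq, zero_add, add_sub_cancel_left]
  calc ‖φ (eulerStep b σ h x (ofLp g))‖
      ≤ |φ u| + |φ (eulerStep b σ h x (ofLp g)) - φ u| := by
        rw [Real.norm_eq_abs]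
        linarith [abs_sub_abs_le_abs_sub (φ (eulerStep b σ h x (ofLp g))) (φ u)]
    _ ≤ |φ u| + C * vnorm (0 + √h • (σ x *ᵥ ofLp g)) := by
        rw [← hdiff]; gcongr; exact hφ _ _

lemma abs_integral_comp_eulerStep_sub_le (hφ : ∀ x y, |φ x - φ y| ≤ C * vnorm (x - y))
    (hC : 0 ≤ C) (hh : 0 ≤ h) (x y : Fin d → ℝ) :
    |∫ g, φ (eulerStep b σ h x (ofLp g)) ∂stdGaussian (EuclideanSpace ℝ (Fin d)) -
        ∫ g, φ (eulerStep b σ h y (ofLp g)) ∂stdGaussian (EuclideanSpace ℝ (Fin d))|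
      ≤ C * √(vnorm (x - y + h • (b x - b y)) ^ 2 + h * frobNorm (σ x - σ y) ^ 2) := by
  have hD := memLp_vnorm_add_smul_mulVec (x - y + h • (b x - b y)) (σ x - σ y) √h
  simp only [← eulerStep_sub_eulerStep] at hD
  have hsecond : ∫ g, vnorm (eulerStep b σ h x (ofLp g) - eulerStep b σ h y (ofLp g)) ^ 2
      ∂stdGaussian (EuclideanSpace ℝ (Fin d)) =
        vnorm (x - y + h • (b x - b y)) ^ 2 + h * frobNorm (σ x - σ y) ^ 2 := by
    simp only [eulerStep_sub_eulerStep, integral_vnorm_add_smul_mulVec_sq, Real.sq_sqrt hh]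
  rw [← integral_sub (integrable_comp_eulerStep b σ h hφ x)
      (integrable_comp_eulerStep b σ h hφ y),
    ← Real.norm_eq_abs, ← hsecond]
  calc _ ≤ ∫ g, C * vnorm (eulerStep b σ h x (ofLp g) - eulerStep b σ h y (ofLp g))
        ∂stdGaussian (EuclideanSpace ℝ (Fin d)) :=
        norm_integral_le_of_norm_le ((hD.integrable one_le_two).const_mul C)
          (ae_of_all _ fun g => hφ _ _)
    _ ≤ _ := by
        rw [integral_const_mul]
        exact mul_le_mul_of_nonneg_left (integral_le_sqrt_integral_sq hD) hC

end EulerStep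

theorem euler_step_lipschitz_general
    {Ω : Type*} [MeasurableSpace Ω] (μ : Measure Ω)
    {d : ℕ} (G : Ω → Fin d → ℝ)
    (hG : μ.map G = Measure.pi fun _ : Fin d => gaussianReal 0 1)
    (h : ℝ) (hh : 0 < h)
    (b : (Fin d → ℝ) → Fin d → ℝ) (σ : (Fin d → ℝ) → Matrix (Fin d) (Fin d) ℝ)
    (Cb Cσ : ℝ)
    (hb : ∀ x y, vnorm (b x - b y) ≤ Cb * vnorm (x - y))
    (hσ : ∀ x y, frobNorm (σ x - σ y) ≤ Cσ * vnorm (x - y))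
    (C : ℝ) (φ : (Fin d → ℝ) → ℝ)
    (hφ : ∀ x y, |φ x - φ y| ≤ C * vnorm (x - y)) :
    ∀ x y : Fin d → ℝ,
      |(∫ ω, φ (fun i => x i + b x i * h + Real.sqrt h * (σ x).mulVec (G ω) i) ∂μ) -
          ∫ ω, φ (fun i => y i + b y i * h + Real.sqrt h * (σ y).mulVec (G ω) i) ∂μ|
        ≤ C * (1 + (Cb + Cσ ^ 2 / 2) * h) * vnorm (x - y) := by
  intro x y
  rcases eq_or_ne x y with rfl | hxy
  · simp [vnorm]
  have hs : 0 < vnorm (x - y) := vnorm_pos (sub_ne_zero.mpr hxy)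
  have hC : 0 ≤ C := nonneg_of_mul_nonneg_left ((abs_nonneg _).trans (hφ x y)) hs
  have hCb : 0 ≤ Cb := nonneg_of_mul_nonneg_left ((vnorm_nonneg _).trans (hb x y)) hs
  have hφc := continuous_of_abs_sub_le_mul_vnorm hφ
  have hlaw : ∀ z, ∫ ω, φ (eulerStep b σ h z (G ω)) ∂μ =
      ∫ g, φ (eulerStep b σ h z (ofLp g)) ∂stdGaussian (EuclideanSpace ℝ (Fin d)) := fun z =>
    integral_comp_eq_integral_stdGaussian hG (hφc.comp (continuous_eulerStep b σ h z)).measurable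
  change |∫ ω, φ (eulerStep b σ h x (G ω)) ∂μ - ∫ ω, φ (eulerStep b σ h y (G ω)) ∂μ| ≤ _
  rw [hlaw, hlaw, mul_assoc]
  exact (abs_integral_comp_eulerStep_sub_le b σ h hφ hC hh.le x y).trans
    (mul_le_mul_of_nonneg_left (sqrt_sq_add_mul_sq_le hh.le hCb hs.le (vnorm_nonneg _)
      (vnorm_add_smul_le hh.le (hb x y)) (frobNorm_nonneg _) (hσ x y)) hC)

/-- **Lemma (one Euler step preserves Lipschitz continuity of expectations).**
Let `G` be a standard `d`-dimensional Gaussian vector, `h > 0`, and `b`, `σ` Lipschitz with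
constants `C_b`, `C_σ` (σ in Frobenius norm). If `φ` is Lipschitz with constant `C`, then
`x ↦ E[φ(x + b(x)h + σ(x)√h G)]` is Lipschitz with constant `C(1 + Lh)`, `L = C_b + C_σ²/2`. -/
theorem euler_step_lipschitz
    {Ω : Type*} [MeasurableSpace Ω] (μ : Measure Ω) [IsProbabilityMeasure μ]
    {d : ℕ} (G : Ω → Fin d → ℝ) (hGmeas : Measurable G)
    (hG : μ.map G = Measure.pi fun _ : Fin d => gaussianReal 0 1)
    (h : ℝ) (hh : 0 < h)
    (b : (Fin d → ℝ) → Fin d → ℝ) (σ : (Fin d → ℝ) → Matrix (Fin d) (Fin d) ℝ)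
    (Cb Cσ : ℝ)
    (hb : ∀ x y, vnorm (b x - b y) ≤ Cb * vnorm (x - y))
    (hσ : ∀ x y, frobNorm (σ x - σ y) ≤ Cσ * vnorm (x - y))
    (C : ℝ) (φ : (Fin d → ℝ) → ℝ)
    (hφ : ∀ x y, |φ x - φ y| ≤ C * vnorm (x - y)) :
    ∀ x y : Fin d → ℝ,
      |(∫ ω, φ (fun i => x i + b x i * h + Real.sqrt h * (σ x).mulVec (G ω) i) ∂μ) -
          ∫ ω, φ (fun i => y i + b y i * h + Real.sqrt h * (σ y).mulVec (G ω) i) ∂μ|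
        ≤ C * (1 + (Cb + Cσ ^ 2 / 2) * h) * vnorm (x - y) :=
  euler_step_lipschitz_general μ G hG h hh b σ Cb Cσ hb hσ C φ hφ
end

section
/- Existence of the knitting function (electricity price model): For all real numbers x₁ < x₂ and y₁ < y₂ and every a > 0, setting b := (1/2)( x₁ + x₂ + √( (x₂ − x₁)² + 4a(x₂ − x₁)/(y₂ − y₁) ) ) and c := y₁ − a/(b − x₁), one has b > x₂ (so that p(x) := a/(b − x) + c is well defined, strictly increasing and finite on (−∞, b) ⊇ [x₁, x₂]), and p(x₁) = y₁ and p(x₂) = y₂. -/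
/-- **Existence of the knitting function (electricity price model).**
For `x₁ < x₂`, `y₁ < y₂` and any `a > 0`, setting
`b = (x₁ + x₂ + √((x₂-x₁)² + 4a(x₂-x₁)/(y₂-y₁)))/2` and `c = y₁ - a/(b - x₁)`,
one has `b > x₂` (so that `p x = a/(b-x) + c` is well defined, strictly increasing and
finite on `(-∞, b) ⊇ [x₁,x₂]`), and `p x₁ = y₁`, `p x₂ = y₂`. -/
theorem knitting_function_exists (x₁ x₂ y₁ y₂ a : ℝ) (hx : x₁ < x₂) (hy : y₁ < y₂)
    (ha : 0 < a) :
    let b : ℝ := (x₁ + x₂ + Real.sqrt ((x₂ - x₁) ^ 2 + 4 * a * (x₂ - x₁) / (y₂ - y₁))) / 2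
    let c : ℝ := y₁ - a / (b - x₁)
    let p : ℝ → ℝ := fun x => a / (b - x) + c
    x₂ < b ∧ StrictMonoOn p (Set.Iio b) ∧ p x₁ = y₁ ∧ p x₂ = y₂ := by
  intro b c p
  have hyd : 0 < y₂ - y₁ := by linarith
  have hxd : 0 < x₂ - x₁ := by linarith
  set D : ℝ := (x₂ - x₁) ^ 2 + 4 * a * (x₂ - x₁) / (y₂ - y₁) with hDdef
  have hDpos : (x₂ - x₁) ^ 2 < D := by
    have h : 0 < 4 * a * (x₂ - x₁) / (y₂ - y₁) := by positivity
    rw [hDdef]; linarith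
  have hD0 : 0 ≤ D := le_trans (by positivity) hDpos.le
  set s : ℝ := Real.sqrt D with hsdef
  have hs2 : s ^ 2 = D := Real.sq_sqrt hD0
  have hs_gt : x₂ - x₁ < s := by
    have := Real.sqrt_lt_sqrt (by positivity : (0:ℝ) ≤ (x₂ - x₁)^2) hDpos
    rwa [Real.sqrt_sq hxd.le] at this
  have hb : b = (x₁ + x₂ + s) / 2 := rfl
  have hbx2 : x₂ < b := by rw [hb]; linarith
  have hbx1 : x₁ < b := lt_trans hx hbx2
  have h1 : b - x₁ ≠ 0 := by linarith
  have h2 : b - x₂ ≠ 0 := by linarith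
  -- key identity
  have hkey : (b - x₁) * (b - x₂) * (y₂ - y₁) = a * (x₂ - x₁) := by
    have hs' : s = 2 * b - x₁ - x₂ := by rw [hb]; ring
    have : (2 * b - x₁ - x₂) ^ 2 = D := by rw [← hs']; exact hs2
    rw [hDdef] at this
    field_simp at this
    nlinarith [this]
  refine ⟨hbx2, ?_, ?_, ?_⟩
  · intro u hu v hv huv
    simp only [Set.mem_Iio] at hu hv
    have : a / (b - u) < a / (b - v) :=
      div_lt_div_of_pos_left ha (by linarith) (by linarith)
    simp only [p]
    linarith
  · show a / (b - x₁) + (y₁ - a / (b - x₁)) = y₁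
    ring
  · show a / (b - x₂) + (y₁ - a / (b - x₁)) = y₂
    field_simp
    nlinarith [hkey]
end
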